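/- Let the observation space Y be partitioned into two disjoint Borel subsets Y₁ and Y₂ with Y₁ open in Y. Suppose: (a) the stochastic kernels P on X given X×A and Q on Y given A×X are weakly continuous; (b) the measure R′(·|z,a) restricted to Y₂ is setwise continuous in (z,a), i.e. for every sequence (z⁽ⁿ⁾,a⁽ⁿ⁾) → (z,a) in P(X)×A (with z⁽ⁿ⁾ → z weakly) and every Borel C ⊆ Y₂, R′(C|z⁽ⁿ⁾,a⁽ⁿ⁾) → R′(C|z,a); (c) there exists a stochastic kernel H on X given P(X)×A×Y satisfying the disintegration identity (3.4) such that (i) the restriction of H to P(X)×A×Y₁ is weakly continuous, and (ii) whenever z⁽ⁿ⁾ → z weakly and a⁽ⁿ⁾ → a, there exist a subsequence (z⁽ⁿᵏ⁾,a⁽ⁿᵏ⁾) and a Borel set C ⊆ Y₂ with R′(Y₂∖C|z,a) = 0 such that H(z⁽ⁿᵏ⁾,a⁽ⁿᵏ⁾,y) → H(z,a,y) weakly for all y ∈ C. Then the stochastic kernel q on P(X) given P(X)×A, defined by q(D|z,a) = ∫_Y 1{H(z,a,y) ∈ D} R′(dy|z,a), is weakly continuous. -/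

import Mathlib

open MeasureTheory Filter Topology
open scoped ENNReal NNReal

/-- The joint kernel `R(B×C|z,a) = ∫_X ∫_B Q(C|a,x') P(dx'|x,a) z(dx)` of formula (3.3). -/
noncomputable def Rfun {X Y A : Type*} [MeasurableSpace X] [MeasurableSpace Y]
    (P : X × A → ProbabilityMeasure X) (Q : A × X → ProbabilityMeasure Y)
    (z : ProbabilityMeasure X) (a : A) (B : Set X) (C : Set Y) : ℝ≥0∞ :=
  ∫⁻ x, (∫⁻ x' in B, ((Q (a, x') : Measure Y) C) ∂((P (x, a) : Measure X))) ∂(z : Measure X)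

/-- The marginal observation kernel `R'(dy|z,a)` on `Y` given `P(X)×A`, as a measure. -/
noncomputable def RprimeM {X Y A : Type*} [MeasurableSpace X] [MeasurableSpace Y]
    (P : X × A → ProbabilityMeasure X) (Q : A × X → ProbabilityMeasure Y)
    (z : ProbabilityMeasure X) (a : A) : Measure Y :=
  ((z : Measure X).bind fun x => (P (x, a) : Measure X)).bind fun x' => (Q (a, x') : Measure Y)

/-- The disintegration identity (3.4). -/
def Disint {X Y A : Type*} [MeasurableSpace X] [MeasurableSpace Y]
    (P : X × A → ProbabilityMeasure X) (Q : A × X → ProbabilityMeasure Y)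
    (H : ProbabilityMeasure X × A × Y → ProbabilityMeasure X) : Prop :=
  ∀ (z : ProbabilityMeasure X) (a : A) (B : Set X) (C : Set Y),
    MeasurableSet B → MeasurableSet C →
      Rfun P Q z a B C = ∫⁻ y in C, ((H (z, a, y) : Measure X) B) ∂(RprimeM P Q z a)

/-- The Borel σ-algebra of the weak topology on `P(X)`. -/
noncomputable instance probabilityMeasureMeasurableSpace {X : Type*}
    [MeasurableSpace X] [TopologicalSpace X] [OpensMeasurableSpace X] :
    MeasurableSpace (ProbabilityMeasure X) := borel _

/-- The transition kernel `q(D|z,a) = ∫_Y 1{H(z,a,y) ∈ D} R'(dy|z,a)` of the COMDP. -/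
noncomputable def qker {X Y A : Type*}
    [MeasurableSpace X] [TopologicalSpace X] [OpensMeasurableSpace X] [MeasurableSpace Y]
    (P : X × A → ProbabilityMeasure X) (Q : A × X → ProbabilityMeasure Y)
    (H : ProbabilityMeasure X × A × Y → ProbabilityMeasure X)
    (z : ProbabilityMeasure X) (a : A) : Measure (ProbabilityMeasure X) :=
  (RprimeM P Q z a).map fun y => H (z, a, y)

/-!
Weak convergence enters only through the portmanteau inequality `μ G ≤ liminf μₙ G` for open `G`.
Along the subsequence provided by (c)(ii), `q(·|zₙ,aₙ)` is the image of `R'(·|zₙ,aₙ)` under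
`y ↦ H(zₙ,aₙ,y)`, so it suffices that `∫ F(H(zₙ,aₙ,y)) R'(dy|zₙ,aₙ) → ∫ F(H(z,a,y)) R'(dy|z,a)`
for bounded continuous `F ≥ 0`. Both `F` and `K - F` (with `K` a bound of `F`) satisfy a Fatou
inequality: on the open set `Y₁` the integrands converge continuously, which gives the
generalized Fatou lemma for weakly converging measures, and on `Y₂` they converge pointwise
`R'(·|z,a)`-a.e., which gives Fatou's lemma for setwise converging measures. The two liminf
inequalities squeeze the limit. The portmanteau inequality for `R'` itself comes from the
generalized Fatou lemma applied to the two kernel integrals defining it.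
-/

theorem ENNReal.le_liminf_add (u v : ℕ → ℝ≥0∞) :
    atTop.liminf u + atTop.liminf v ≤ atTop.liminf (u + v) := by
  simp only [liminf_eq_iSup_iInf_of_nat]
  refine ENNReal.iSup_add_iSup_le fun N M => le_iSup_of_le (max N M) (le_iInf₂ fun n hn => ?_)
  exact add_le_add (iInf₂_le n (le_of_max_le_left hn)) (iInf₂_le n (le_of_max_le_right hn))

theorem lintegral_const_sub {α : Type*} [MeasurableSpace α] (μ : Measure α)
    [IsProbabilityMeasure μ] {g : α → ℝ≥0∞} {K : ℝ≥0∞} (hK : K ≠ ∞) (hg : Measurable g)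
    (hg_le : ∀ x, g x ≤ K) :
    ∫⁻ x, K - g x ∂μ = K - ∫⁻ x, g x ∂μ := by
  have hfin : ∫⁻ x, g x ∂μ ≠ ∞ :=
    ne_top_of_le_ne_top hK (lintegral_le_const (ae_of_all _ hg_le))
  rw [lintegral_sub hg hfin (Eventually.of_forall hg_le)]
  simp

theorem tendsto_lintegral_of_le_liminf_of_le_liminf_sub {α : Type*} [MeasurableSpace α]
    {μ : Measure α} {μs : ℕ → Measure α} [IsProbabilityMeasure μ]
    [∀ n, IsProbabilityMeasure (μs n)] {g : α → ℝ≥0∞} {gs : ℕ → α → ℝ≥0∞} {K : ℝ≥0∞}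
    (hK : K ≠ ∞) (hg : Measurable g) (hgs : ∀ n, Measurable (gs n)) (hg_le : ∀ x, g x ≤ K)
    (hgs_le : ∀ n x, gs n x ≤ K)
    (h_liminf : ∫⁻ x, g x ∂μ ≤ atTop.liminf fun n => ∫⁻ x, gs n x ∂μs n)
    (h_liminf_sub : ∫⁻ x, K - g x ∂μ ≤ atTop.liminf fun n => ∫⁻ x, K - gs n x ∂μs n) :
    Tendsto (fun n => ∫⁻ x, gs n x ∂μs n) atTop (𝓝 (∫⁻ x, g x ∂μ)) := by
  refine tendsto_of_le_liminf_of_limsup_le h_liminf ?_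
  simp only [lintegral_const_sub _ hK hg hg_le, lintegral_const_sub _ hK (hgs _) (hgs_le _)]
    at h_liminf_sub
  calc atTop.limsup (fun n => ∫⁻ x, gs n x ∂μs n)
      = atTop.limsup (fun n => K - (K - ∫⁻ x, gs n x ∂μs n)) := by
        simp only [ENNReal.sub_sub_cancel hK (lintegral_le_const (ae_of_all _ (hgs_le _)))]
    _ = K - atTop.liminf (fun n => K - ∫⁻ x, gs n x ∂μs n) := ENNReal.limsup_const_sub _ _ hK
    _ ≤ K - (K - ∫⁻ x, g x ∂μ) := tsub_le_tsub_left h_liminf_sub K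
    _ = ∫⁻ x, g x ∂μ := ENNReal.sub_sub_cancel hK (lintegral_le_const (ae_of_all _ hg_le))

theorem integral_eq_toReal_lintegral_ofReal_add_sub {α : Type*} [MeasurableSpace α]
    (μ : Measure α) [IsProbabilityMeasure μ] {g : α → ℝ} (hg : AEStronglyMeasurable g μ)
    {M : ℝ} (hgM : ∀ x, ‖g x‖ ≤ M) :
    ∫ x, g x ∂μ = (∫⁻ x, ENNReal.ofReal (g x + M) ∂μ).toReal - M := by
  have hint : Integrable g μ := .of_bound hg M (ae_of_all _ hgM)
  rw [← integral_eq_lintegral_of_nonneg_ae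
    (ae_of_all _ fun x => neg_le_iff_add_nonneg.mp (neg_le_of_abs_le (hgM x)))
    (hg.add aestronglyMeasurable_const), integral_add hint (integrable_const M)]
  simp

section Portmanteau

variable {Ω : Type*} [TopologicalSpace Ω] [MeasurableSpace Ω] [OpensMeasurableSpace Ω]
  {μ : Measure Ω} {μs : ℕ → Measure Ω}

theorem lintegral_le_liminf_lintegral_of_lowerSemicontinuous
    (h_opens : ∀ G, IsOpen G → μ G ≤ atTop.liminf fun n => μs n G)
    {f : Ω → ℝ≥0∞} (hf : LowerSemicontinuous f) (hf_top : ∀ x, f x ≠ ∞) :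
    ∫⁻ x, f x ∂μ ≤ atTop.liminf fun n => ∫⁻ x, f x ∂μs n := by
  set g : Ω → ℝ := fun x => (f x).toReal
  have hg : Measurable g := hf.measurable.ennreal_toReal
  have h_layercake : ∀ ν : Measure Ω, ∫⁻ x, f x ∂ν = ∫⁻ t in Set.Ioi 0, ν {x | t < g x} := by
    intro ν
    rw [← lintegral_eq_lintegral_meas_lt ν (Eventually.of_forall fun _ => ENNReal.toReal_nonneg)
      hg.aemeasurable]
    exact lintegral_congr fun x => (ENNReal.ofReal_toReal (hf_top x)).symm
  have h_superlevel : ∀ t > (0 : ℝ), {x | t < g x} = f ⁻¹' Set.Ioi (ENNReal.ofReal t) := by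
    intro t ht
    ext x
    exact (ENNReal.ofReal_lt_iff_lt_toReal ht.le (hf_top x)).symm
  simp only [h_layercake]
  calc ∫⁻ t in Set.Ioi 0, μ {x | t < g x}
      ≤ ∫⁻ t in Set.Ioi 0, atTop.liminf fun n => μs n {x | t < g x} := by
        refine setLIntegral_mono' measurableSet_Ioi fun t ht => ?_
        rw [h_superlevel t ht]
        exact h_opens _ (hf.isOpen_preimage _)
    _ ≤ atTop.liminf fun n => ∫⁻ t in Set.Ioi 0, μs n {x | t < g x} :=
        lintegral_liminf_le fun n => Antitone.measurable fun s t hst =>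
          measure_mono fun x hx => lt_of_le_of_lt hst hx

end Portmanteau

section LowerEnvelope

variable {S : Type*} [TopologicalSpace S] (vs : ℕ → S → ℝ≥0∞)

noncomputable def lowerEnvelope (N : ℕ) (x : S) : ℝ≥0∞ :=
  ⨆ U ∈ 𝓝 x, ⨅ n ≥ N, ⨅ y ∈ U, vs n y

theorem lowerSemicontinuous_lowerEnvelope (N : ℕ) : LowerSemicontinuous (lowerEnvelope vs N) := by
  intro x c hc
  obtain ⟨U, hU, hcU⟩ := lt_biSup_iff.mp hc
  filter_upwards [interior_mem_nhds.mpr hU] with x' hx'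
  refine hcU.trans_le (le_iSup₂_of_le (interior U) (isOpen_interior.mem_nhds hx') ?_)
  exact iInf₂_mono fun n _ => iInf₂_mono' fun y hy => ⟨y, interior_subset hy, le_rfl⟩

theorem lowerEnvelope_le {N n : ℕ} (hn : N ≤ n) (x : S) : lowerEnvelope vs N x ≤ vs n x :=
  iSup₂_le fun _ hU => (iInf₂_le n hn).trans (iInf₂_le x (mem_of_mem_nhds hU))

theorem monotone_lowerEnvelope : Monotone (lowerEnvelope vs) :=
  fun _ _ hNM _ => iSup₂_mono fun _ _ => le_iInf₂ fun n hn => iInf₂_le n (hNM.trans hn)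

theorem liminf_le_iSup_lowerEnvelope (x : S) :
    (atTop ×ˢ 𝓝 x).liminf (fun p : ℕ × S => vs p.1 p.2) ≤ ⨆ N, lowerEnvelope vs N x := by
  rw [(atTop_basis.prod (𝓝 x).basis_sets).liminf_eq_iSup_iInf]
  refine iSup₂_le fun i hi => le_iSup_of_le i.1 (le_iSup₂_of_le i.2 hi.2 ?_)
  exact le_iInf₂ fun n hn => le_iInf₂ fun y hy => iInf₂_le (n, y) ⟨hn, hy⟩

end LowerEnvelope

theorem lintegral_le_liminf_lintegral_of_le_liminf_prod {S : Type*} [TopologicalSpace S]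
    [MeasurableSpace S] [OpensMeasurableSpace S] {μ : Measure S} {μs : ℕ → Measure S}
    (h_opens : ∀ G, IsOpen G → μ G ≤ atTop.liminf fun n => μs n G)
    {v : S → ℝ≥0∞} {vs : ℕ → S → ℝ≥0∞} {K : ℝ≥0∞} (hK : K ≠ ∞) (hvs_le : ∀ n x, vs n x ≤ K)
    (hv : ∀ x, v x ≤ (atTop ×ˢ 𝓝 x).liminf fun p : ℕ × S => vs p.1 p.2) :
    ∫⁻ x, v x ∂μ ≤ atTop.liminf fun n => ∫⁻ x, vs n x ∂μs n := by
  have hL := lowerSemicontinuous_lowerEnvelope vs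
  calc ∫⁻ x, v x ∂μ ≤ ∫⁻ x, ⨆ N, lowerEnvelope vs N x ∂μ :=
        lintegral_mono fun x => (hv x).trans (liminf_le_iSup_lowerEnvelope vs x)
    _ = ⨆ N, ∫⁻ x, lowerEnvelope vs N x ∂μ :=
        lintegral_iSup (fun N => (hL N).measurable) (monotone_lowerEnvelope vs)
    _ ≤ atTop.liminf fun n => ∫⁻ x, vs n x ∂μs n := by
        refine iSup_le fun N => ?_
        have hL_top : ∀ x, lowerEnvelope vs N x ≠ ∞ :=
          fun x => ne_top_of_le_ne_top hK ((lowerEnvelope_le vs le_rfl x).trans (hvs_le N x))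
        refine (lintegral_le_liminf_lintegral_of_lowerSemicontinuous h_opens (hL N) hL_top).trans ?_
        refine liminf_le_liminf (eventually_atTop.mpr ⟨N, fun n hn => ?_⟩)
        exact lintegral_mono (lowerEnvelope_le vs hn)

section Setwise

variable {α : Type*} [MeasurableSpace α] {μ : Measure α} {μs : ℕ → Measure α}

theorem lintegral_le_liminf_lintegral_of_tendsto_measure
    (h_setwise : ∀ E, MeasurableSet E → Tendsto (fun n => μs n E) atTop (𝓝 (μ E)))
    {w : α → ℝ≥0∞} (hw : Measurable w) :
    ∫⁻ x, w x ∂μ ≤ atTop.liminf fun n => ∫⁻ x, w x ∂μs n := by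
  rw [lintegral_eq_iSup_eapprox_lintegral hw]
  refine iSup_le fun N => ?_
  set φ := SimpleFunc.eapprox w N
  have hφ : Tendsto (fun n => φ.lintegral (μs n)) atTop (𝓝 (φ.lintegral μ)) := by
    refine tendsto_finsetSum _ fun c hc => ?_
    obtain ⟨x, rfl⟩ := SimpleFunc.mem_range.mp hc
    exact ENNReal.Tendsto.const_mul (h_setwise _ (SimpleFunc.measurableSet_preimage _ _))
      (Or.inr (SimpleFunc.eapprox_lt_top w N x).ne)
  rw [← hφ.liminf_eq]
  refine liminf_le_liminf (Eventually.of_forall fun n => ?_)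
  rw [← SimpleFunc.lintegral_eq_lintegral]
  exact lintegral_mono fun x => (le_iSup (fun N => SimpleFunc.eapprox w N x) N).trans_eq
    (SimpleFunc.iSup_eapprox_apply hw x)

theorem lintegral_le_liminf_lintegral_of_tendsto_measure_of_ae_le_liminf
    (h_setwise : ∀ E, MeasurableSet E → Tendsto (fun n => μs n E) atTop (𝓝 (μ E)))
    {v : α → ℝ≥0∞} {vs : ℕ → α → ℝ≥0∞} (hvs : ∀ n, Measurable (vs n))
    (hv : ∀ᵐ x ∂μ, v x ≤ atTop.liminf fun n => vs n x) :
    ∫⁻ x, v x ∂μ ≤ atTop.liminf fun n => ∫⁻ x, vs n x ∂μs n := by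
  set w : ℕ → α → ℝ≥0∞ := fun N x => ⨅ n ≥ N, vs n x
  have hw : ∀ N, Measurable (w N) := fun N => .iInf fun n => .iInf fun _ => hvs n
  calc ∫⁻ x, v x ∂μ ≤ ∫⁻ x, ⨆ N, w N x ∂μ :=
        lintegral_mono_ae (hv.mono fun x hx => hx.trans_eq liminf_eq_iSup_iInf_of_nat)
    _ = ⨆ N, ∫⁻ x, w N x ∂μ :=
        lintegral_iSup hw fun _ _ hNM _ => le_iInf₂ fun n hn => iInf₂_le n (hNM.trans hn)
    _ ≤ atTop.liminf fun n => ∫⁻ x, vs n x ∂μs n := by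
        refine iSup_le fun N => (lintegral_le_liminf_lintegral_of_tendsto_measure h_setwise
          (hw N)).trans (liminf_le_liminf (eventually_atTop.mpr ⟨N, fun n hn => ?_⟩))
        exact lintegral_mono fun x => iInf₂_le n hn

end Setwise

section OpenAndComplement

variable {Y : Type*} [TopologicalSpace Y] [MeasurableSpace Y] [OpensMeasurableSpace Y]
  {μ : Measure Y} {μs : ℕ → Measure Y} {U : Set Y}

theorem lintegral_le_liminf_lintegral_of_isOpen_of_compl (hU : IsOpen U)
    (h_opens : ∀ G, IsOpen G → μ G ≤ atTop.liminf fun n => μs n G)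
    (h_compl : ∀ E ⊆ Uᶜ, MeasurableSet E → Tendsto (fun n => μs n E) atTop (𝓝 (μ E)))
    {v : Y → ℝ≥0∞} {vs : ℕ → Y → ℝ≥0∞} {K : ℝ≥0∞} (hK : K ≠ ∞) (hvs_le : ∀ n x, vs n x ≤ K)
    (hvs : ∀ n, Measurable (vs n))
    (hv_open : ∀ x ∈ U, v x ≤ (atTop ×ˢ 𝓝 x).liminf fun p : ℕ × Y => vs p.1 p.2)
    (hv_compl : ∀ᵐ x ∂μ, x ∈ Uᶜ → v x ≤ atTop.liminf fun n => vs n x) :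
    ∫⁻ x, v x ∂μ ≤ atTop.liminf fun n => ∫⁻ x, vs n x ∂μs n := by
  have h_open_part : ∫⁻ x in U, v x ∂μ ≤ atTop.liminf fun n => ∫⁻ x in U, vs n x ∂μs n := by
    simp only [← lintegral_indicator hU.measurableSet]
    refine lintegral_le_liminf_lintegral_of_le_liminf_prod h_opens hK
      (fun n x => (Set.indicator_le_self _ _ x).trans (hvs_le n x)) fun x => ?_
    by_cases hx : x ∈ U
    · have h_in : ∀ᶠ p : ℕ × Y in atTop ×ˢ 𝓝 x, p.2 ∈ U :=
        tendsto_snd.eventually (hU.mem_nhds hx)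
      rw [Set.indicator_of_mem hx, liminf_congr (h_in.mono fun p hp => Set.indicator_of_mem hp _)]
      exact hv_open x hx
    · simp [hx]
  have h_compl_part :
      ∫⁻ x in Uᶜ, v x ∂μ ≤ atTop.liminf fun n => ∫⁻ x in Uᶜ, vs n x ∂μs n := by
    refine lintegral_le_liminf_lintegral_of_tendsto_measure_of_ae_le_liminf (fun E hE => ?_) hvs
      ((ae_restrict_iff' hU.measurableSet.compl).mpr hv_compl)
    simp only [Measure.restrict_apply hE]
    exact h_compl _ Set.inter_subset_right (hE.inter hU.measurableSet.compl)
  calc ∫⁻ x, v x ∂μ = ∫⁻ x in U, v x ∂μ + ∫⁻ x in Uᶜ, v x ∂μ :=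
        (lintegral_add_compl _ hU.measurableSet).symm
    _ ≤ atTop.liminf (fun n => ∫⁻ x in U, vs n x ∂μs n)
          + atTop.liminf (fun n => ∫⁻ x in Uᶜ, vs n x ∂μs n) := add_le_add h_open_part h_compl_part
    _ ≤ atTop.liminf fun n => ∫⁻ x, vs n x ∂μs n := by
        refine (ENNReal.le_liminf_add _ _).trans_eq (liminf_congr (Eventually.of_forall ?_))
        exact fun n => lintegral_add_compl _ hU.measurableSet

theorem tendsto_lintegral_of_isOpen_of_compl [IsProbabilityMeasure μ]
    [∀ n, IsProbabilityMeasure (μs n)] (hU : IsOpen U)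
    (h_opens : ∀ G, IsOpen G → μ G ≤ atTop.liminf fun n => μs n G)
    (h_compl : ∀ E ⊆ Uᶜ, MeasurableSet E → Tendsto (fun n => μs n E) atTop (𝓝 (μ E)))
    {g : Y → ℝ≥0∞} {gs : ℕ → Y → ℝ≥0∞} {K : ℝ≥0∞} (hK : K ≠ ∞) (hg : Measurable g)
    (hgs : ∀ n, Measurable (gs n)) (hg_le : ∀ x, g x ≤ K) (hgs_le : ∀ n x, gs n x ≤ K)
    (hg_open : ∀ x ∈ U, Tendsto (fun p : ℕ × Y => gs p.1 p.2) (atTop ×ˢ 𝓝 x) (𝓝 (g x)))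
    (hg_compl : ∀ᵐ x ∂μ, x ∈ Uᶜ → Tendsto (fun n => gs n x) atTop (𝓝 (g x))) :
    Tendsto (fun n => ∫⁻ x, gs n x ∂μs n) atTop (𝓝 (∫⁻ x, g x ∂μ)) := by
  refine tendsto_lintegral_of_le_liminf_of_le_liminf_sub hK hg hgs hg_le hgs_le ?_ ?_
  · exact lintegral_le_liminf_lintegral_of_isOpen_of_compl hU h_opens h_compl hK hgs_le hgs
      (fun x hx => (hg_open x hx).liminf_eq.ge)
      (hg_compl.mono fun x hx hxU => (hx hxU).liminf_eq.ge)
  · exact lintegral_le_liminf_lintegral_of_isOpen_of_compl hU h_opens h_compl hK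
      (fun _ _ => tsub_le_self) (fun n => measurable_const.sub (hgs n))
      (fun x hx => (ENNReal.Tendsto.sub tendsto_const_nhds (hg_open x hx) (.inl hK)).liminf_eq.ge)
      (hg_compl.mono fun x hx hxU =>
        (ENNReal.Tendsto.sub tendsto_const_nhds (hx hxU) (.inl hK)).liminf_eq.ge)

theorem tendsto_integral_map_of_isOpen_of_compl [IsProbabilityMeasure μ]
    [∀ n, IsProbabilityMeasure (μs n)] {Z : Type*} [TopologicalSpace Z] [MeasurableSpace Z]
    [OpensMeasurableSpace Z] (hU : IsOpen U)
    (h_opens : ∀ G, IsOpen G → μ G ≤ atTop.liminf fun n => μs n G)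
    (h_compl : ∀ E ⊆ Uᶜ, MeasurableSet E → Tendsto (fun n => μs n E) atTop (𝓝 (μ E)))
    {h : Y → Z} {hs : ℕ → Y → Z} (hh : Measurable h) (hhs : ∀ n, Measurable (hs n))
    (hh_open : ∀ y ∈ U, Tendsto (fun p : ℕ × Y => hs p.1 p.2) (atTop ×ˢ 𝓝 y) (𝓝 (h y)))
    (hh_compl : ∀ᵐ y ∂μ, y ∈ Uᶜ → Tendsto (fun n => hs n y) atTop (𝓝 (h y)))
    (f : BoundedContinuousFunction Z ℝ) :
    Tendsto (fun n => ∫ ζ, f ζ ∂((μs n).map (hs n))) atTop (𝓝 (∫ ζ, f ζ ∂(μ.map h))) := by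
  set F : Z → ℝ≥0∞ := fun ζ => ENNReal.ofReal (f ζ + ‖f‖)
  have hF : Continuous F := ENNReal.continuous_ofReal.comp (f.continuous.add continuous_const)
  have hF_le : ∀ ζ, F ζ ≤ ENNReal.ofReal (‖f‖ + ‖f‖) := fun ζ =>
    ENNReal.ofReal_le_ofReal (add_le_add_left ((le_abs_self _).trans (f.norm_coe_le_norm _)) _)
  have h_int : ∀ (ν : Measure Y) [IsProbabilityMeasure ν] (k : Y → Z), Measurable k →
      ∫ ζ, f ζ ∂(ν.map k) = (∫⁻ y, F (k y) ∂ν).toReal - ‖f‖ := fun ν _ k hk =>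
    (integral_map hk.aemeasurable f.continuous.measurable.aestronglyMeasurable).trans
      (integral_eq_toReal_lintegral_ofReal_add_sub ν
        (f.continuous.measurable.comp hk).aestronglyMeasurable fun _ => f.norm_coe_le_norm _)
  simp only [h_int _ _ (hhs _), h_int μ h hh]
  refine ((ENNReal.tendsto_toReal (ne_top_of_le_ne_top ENNReal.ofReal_ne_top
    (lintegral_le_const (ae_of_all _ fun _ => hF_le _)))).comp ?_).sub_const _
  exact tendsto_lintegral_of_isOpen_of_compl hU h_opens h_compl ENNReal.ofReal_ne_top
    (hF.measurable.comp hh) (fun n => hF.measurable.comp (hhs n)) (fun _ => hF_le _)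
    (fun _ _ => hF_le _) (fun y hy => (hF.tendsto _).comp (hh_open y hy))
    (hh_compl.mono fun y hy hyU => (hF.tendsto _).comp (hy hyU))

end OpenAndComplement

theorem le_liminf_bind_of_isOpen {α β : Type*} [TopologicalSpace α] [MeasurableSpace α]
    [OpensMeasurableSpace α] [TopologicalSpace β] [MeasurableSpace β] [OpensMeasurableSpace β]
    {μ : Measure α} {μs : ℕ → Measure α}
    (h_opens : ∀ G, IsOpen G → μ G ≤ atTop.liminf fun n => μs n G)
    {κ : α → Measure β} {κs : ℕ → α → Measure β} (hκ : Measurable κ)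
    (hκs : ∀ n, Measurable (κs n)) [∀ n x, IsProbabilityMeasure (κs n x)]
    (hκ_opens : ∀ x G, IsOpen G →
      κ x G ≤ (atTop ×ˢ 𝓝 x).liminf fun p : ℕ × α => κs p.1 p.2 G) :
    ∀ G, IsOpen G → μ.bind κ G ≤ atTop.liminf fun n => (μs n).bind (κs n) G := by
  intro G hG
  simp only [Measure.bind_apply hG.measurableSet hκ.aemeasurable,
    Measure.bind_apply hG.measurableSet (hκs _).aemeasurable]
  exact lintegral_le_liminf_lintegral_of_le_liminf_prod h_opens ENNReal.one_ne_top
    (fun _ _ => prob_le_one) fun x => hκ_opens x G hG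

instance probabilityMeasureBorelSpace {X : Type*}
    [MeasurableSpace X] [TopologicalSpace X] [OpensMeasurableSpace X] :
    BorelSpace (ProbabilityMeasure X) := ⟨rfl⟩

section Observation

variable {X Y A : Type*} [MeasurableSpace X] [MeasurableSpace Y] [MeasurableSpace A]
  {P : X × A → ProbabilityMeasure X} {Q : A × X → ProbabilityMeasure Y}

theorem isProbabilityMeasure_RprimeM (hPmeas : Measurable fun p => (P p : Measure X))
    (hQmeas : Measurable fun p => (Q p : Measure Y)) (z : ProbabilityMeasure X) (a : A) :
    IsProbabilityMeasure (RprimeM P Q z a) :=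
  haveI := isProbabilityMeasure_bind (m := (z : Measure X)) (f := fun x => (P (x, a) : Measure X))
    (hPmeas.comp (measurable_id.prodMk measurable_const)).aemeasurable
    (ae_of_all _ fun _ => inferInstance)
  isProbabilityMeasure_bind (f := fun x => (Q (a, x) : Measure Y))
    (hQmeas.comp (measurable_const.prodMk measurable_id)).aemeasurable
    (ae_of_all _ fun _ => inferInstance)

theorem RprimeM_le_liminf_of_isOpen [TopologicalSpace X] [OpensMeasurableSpace X]
    [HasOuterApproxClosed X] [TopologicalSpace Y] [OpensMeasurableSpace Y]
    [HasOuterApproxClosed Y] [TopologicalSpace A]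
    (hPmeas : Measurable fun p => (P p : Measure X))
    (hQmeas : Measurable fun p => (Q p : Measure Y)) (hPcont : Continuous P)
    (hQcont : Continuous Q) {zs : ℕ → ProbabilityMeasure X} {z : ProbabilityMeasure X}
    {as : ℕ → A} {a : A} (hz : Tendsto zs atTop (𝓝 z)) (ha : Tendsto as atTop (𝓝 a)) :
    ∀ G, IsOpen G → RprimeM P Q z a G ≤ atTop.liminf fun n => RprimeM P Q (zs n) (as n) G := by
  have hP_sec : ∀ b, Measurable fun x => (P (x, b) : Measure X) :=
    fun _ => hPmeas.comp (measurable_id.prodMk measurable_const)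
  have hQ_sec : ∀ b, Measurable fun x => (Q (b, x) : Measure Y) :=
    fun _ => hQmeas.comp (measurable_const.prodMk measurable_id)
  have hP_opens : ∀ x (G : Set X), IsOpen G → (P (x, a) : Measure X) G ≤
      (atTop ×ˢ 𝓝 x).liminf fun p : ℕ × X => (P (p.2, as p.1) : Measure X) G := fun _ _ hG =>
    ProbabilityMeasure.le_liminf_measure_open_of_tendsto
      ((hPcont.tendsto _).comp (tendsto_snd.prodMk_nhds (ha.comp tendsto_fst))) hG
  have hQ_opens : ∀ x (G : Set Y), IsOpen G → (Q (a, x) : Measure Y) G ≤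
      (atTop ×ˢ 𝓝 x).liminf fun p : ℕ × X => (Q (as p.1, p.2) : Measure Y) G := fun _ _ hG =>
    ProbabilityMeasure.le_liminf_measure_open_of_tendsto
      ((hQcont.tendsto _).comp ((ha.comp tendsto_fst).prodMk_nhds tendsto_snd)) hG
  exact le_liminf_bind_of_isOpen (le_liminf_bind_of_isOpen
    (fun G hG => ProbabilityMeasure.le_liminf_measure_open_of_tendsto hz hG)
    (hP_sec a) (fun n => hP_sec (as n)) hP_opens) (hQ_sec a) (fun n => hQ_sec (as n)) hQ_opens

end Observation

theorem qker_weakly_continuous_combined_general {X Y A : Type*}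
    [MetricSpace X] [MeasurableSpace X] [BorelSpace X]
    [MetricSpace Y] [MeasurableSpace Y] [BorelSpace Y]
    [MetricSpace A] [MeasurableSpace A]
    (P : X × A → ProbabilityMeasure X) (Q : A × X → ProbabilityMeasure Y)
    (hPmeas : Measurable fun p => (P p : Measure X))
    (hQmeas : Measurable fun p => (Q p : Measure Y))
    (Y₁ Y₂ : Set Y) (hY₁open : IsOpen Y₁)
    (hdisj : Disjoint Y₁ Y₂) (hpart : Y₁ ∪ Y₂ = Set.univ)
    -- (a) weak continuity of P and Q
    (hPcont : Continuous P) (hQcont : Continuous Q)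
    -- (b) setwise continuity of R' on subsets of Y₂
    (hR'setwise : ∀ (zs : ℕ → ProbabilityMeasure X) (z : ProbabilityMeasure X)
        (as : ℕ → A) (a : A),
      Tendsto zs atTop (𝓝 z) → Tendsto as atTop (𝓝 a) →
      ∀ C : Set Y, C ⊆ Y₂ → MeasurableSet C →
        Tendsto (fun n => RprimeM P Q (zs n) (as n) C) atTop (𝓝 (RprimeM P Q z a C)))
    -- (c) the filtering kernel H
    (H : ProbabilityMeasure X × A × Y → ProbabilityMeasure X)
    (hHmeas : Measurable H)
    -- (c)(i) weak continuity of H on P(X) × A × Y₁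
    (hHcont : ContinuousOn H {t : ProbabilityMeasure X × A × Y | t.2.2 ∈ Y₁})
    -- (c)(ii) Assumption (H) on Y₂
    (hH2 : ∀ (zs : ℕ → ProbabilityMeasure X) (z : ProbabilityMeasure X)
        (as : ℕ → A) (a : A),
      Tendsto zs atTop (𝓝 z) → Tendsto as atTop (𝓝 a) →
      ∃ φ : ℕ → ℕ, StrictMono φ ∧ ∃ C : Set Y, C ⊆ Y₂ ∧ MeasurableSet C ∧
        RprimeM P Q z a (Y₂ \ C) = 0 ∧
        ∀ y ∈ C, Tendsto (fun k => H (zs (φ k), as (φ k), y)) atTop (𝓝 (H (z, a, y)))) :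
    ∀ (zs : ℕ → ProbabilityMeasure X) (z : ProbabilityMeasure X) (as : ℕ → A) (a : A),
      Tendsto zs atTop (𝓝 z) → Tendsto as atTop (𝓝 a) →
      ∀ f : BoundedContinuousFunction (ProbabilityMeasure X) ℝ,
        Tendsto (fun n => ∫ ζ, f ζ ∂(qker P Q H (zs n) (as n))) atTop
          (𝓝 (∫ ζ, f ζ ∂(qker P Q H z a))) := by
  intro zs z as a hz ha f
  have := isProbabilityMeasure_RprimeM hPmeas hQmeas
  have hY₁c : Y₁ᶜ = Y₂ := (IsCompl.of_eq hdisj.eq_bot hpart).compl_eq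
  have hH_sec : ∀ z a, Measurable fun y => H (z, a, y) := fun _ _ =>
    hHmeas.comp (measurable_const.prodMk (measurable_const.prodMk measurable_id))
  refine tendsto_of_subseq_tendsto fun ns hns => ?_
  obtain ⟨φ, hφ, C, -, -, hC0, hHC⟩ := hH2 _ z _ a (hz.comp hns) (ha.comp hns)
  have hzφ := hz.comp (hns.comp hφ.tendsto_atTop)
  have haφ := ha.comp (hns.comp hφ.tendsto_atTop)
  refine ⟨φ, tendsto_integral_map_of_isOpen_of_compl hY₁open
    (RprimeM_le_liminf_of_isOpen hPmeas hQmeas hPcont hQcont hzφ haφ)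
    (fun E hE hEm => hR'setwise _ z _ a hzφ haφ E (hY₁c ▸ hE) hEm)
    (hH_sec z a) (fun n => hH_sec _ _) (fun y hy => ?_) ?_ f⟩
  · have hH_at : ContinuousAt H (z, a, y) := hHcont.continuousAt
      ((hY₁open.preimage (continuous_snd.comp continuous_snd)).mem_nhds hy)
    exact hH_at.tendsto.comp ((hzφ.comp tendsto_fst).prodMk_nhds
      ((haφ.comp tendsto_fst).prodMk_nhds tendsto_snd))
  · have hC : ∀ᵐ y ∂(RprimeM P Q z a), y ∈ Y₂ → y ∈ C := by
      rw [ae_iff]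
      simp only [Classical.not_imp]
      exact hC0
    filter_upwards [hC] with y hy hyY₁
    exact hHC y (hy (hY₁c ▸ hyY₁))

/-- **Theorem (combining Assumption (H) on `Y₂` with weak continuity of `H` on `Y₁`).**
Let `Y = Y₁ ∪ Y₂` be a partition into disjoint Borel sets with `Y₁` open. If
(a) `P` and `Q` are weakly continuous, (b) `R'(·|z,a)` restricted to `Y₂` is setwise
continuous in `(z,a)`, and (c) there is a stochastic kernel `H` satisfying (3.4) that is
weakly continuous on `P(X)×A×Y₁` and satisfies Assumption (H) on `Y₂`, then the
transition kernel `q` of the COMDP is weakly continuous. -/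
theorem qker_weakly_continuous_combined {X Y A : Type*}
    [MetricSpace X] [SecondCountableTopology X] [MeasurableSpace X] [BorelSpace X]
    [MetricSpace Y] [SecondCountableTopology Y] [MeasurableSpace Y] [BorelSpace Y]
    [MetricSpace A] [SecondCountableTopology A] [MeasurableSpace A] [BorelSpace A]
    (P : X × A → ProbabilityMeasure X) (Q : A × X → ProbabilityMeasure Y)
    (hPmeas : Measurable fun p => (P p : Measure X))
    (hQmeas : Measurable fun p => (Q p : Measure Y))
    (Y₁ Y₂ : Set Y) (hY₁open : IsOpen Y₁) (hY₂meas : MeasurableSet Y₂)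
    (hdisj : Disjoint Y₁ Y₂) (hpart : Y₁ ∪ Y₂ = Set.univ)
    -- (a) weak continuity of P and Q
    (hPcont : Continuous P) (hQcont : Continuous Q)
    -- (b) setwise continuity of R' on subsets of Y₂
    (hR'setwise : ∀ (zs : ℕ → ProbabilityMeasure X) (z : ProbabilityMeasure X)
        (as : ℕ → A) (a : A),
      Tendsto zs atTop (𝓝 z) → Tendsto as atTop (𝓝 a) →
      ∀ C : Set Y, C ⊆ Y₂ → MeasurableSet C →
        Tendsto (fun n => RprimeM P Q (zs n) (as n) C) atTop (𝓝 (RprimeM P Q z a C)))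
    -- (c) the filtering kernel H
    (H : ProbabilityMeasure X × A × Y → ProbabilityMeasure X)
    (hHmeas : Measurable H)
    (hHdis : Disint P Q H)
    -- (c)(i) weak continuity of H on P(X) × A × Y₁
    (hHcont : ContinuousOn H {t : ProbabilityMeasure X × A × Y | t.2.2 ∈ Y₁})
    -- (c)(ii) Assumption (H) on Y₂
    (hH2 : ∀ (zs : ℕ → ProbabilityMeasure X) (z : ProbabilityMeasure X)
        (as : ℕ → A) (a : A),
      Tendsto zs atTop (𝓝 z) → Tendsto as atTop (𝓝 a) →
      ∃ φ : ℕ → ℕ, StrictMono φ ∧ ∃ C : Set Y, C ⊆ Y₂ ∧ MeasurableSet C ∧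
        RprimeM P Q z a (Y₂ \ C) = 0 ∧
        ∀ y ∈ C, Tendsto (fun k => H (zs (φ k), as (φ k), y)) atTop (𝓝 (H (z, a, y)))) :
    ∀ (zs : ℕ → ProbabilityMeasure X) (z : ProbabilityMeasure X) (as : ℕ → A) (a : A),
      Tendsto zs atTop (𝓝 z) → Tendsto as atTop (𝓝 a) →
      ∀ f : BoundedContinuousFunction (ProbabilityMeasure X) ℝ,
        Tendsto (fun n => ∫ ζ, f ζ ∂(qker P Q H (zs n) (as n))) atTop
          (𝓝 (∫ ζ, f ζ ∂(qker P Q H z a))) :=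
  qker_weakly_continuous_combined_general P Q hPmeas hQmeas Y₁ Y₂ hY₁open hdisj hpart hPcont hQcont
    hR'setwise H hHmeas hHcont hH2
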